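/- In the Bershadsky–Polyakov C₂-algebra ℂ[z,x,y,t] with Poisson bracket {z,x}=x, {z,y}=-y, {x,y}=3z²-(3/4)t, and t Poisson central, the ideal generated by xy + z³ - (3/2)tz and t is a Poisson ideal, and the quotient is Poisson-isomorphic to ℂ[x,y,z]/⟨xy+z³⟩ with bracket {z,x}=x, {z,y}=-y, {x,y}=3z². -/

import Mathlib

/-!
The element `C = xy + z³ - (3/4)tz` is a Casimir of the Bershadsky–Polyakov bracket, as is
`t`, and `xy + z³ - (3/2)tz = C - (3/4)tz`; so the ideal `⟨xy + z³ - (3/2)tz, t⟩ = ⟨C, t⟩` is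
generated by Casimirs and is therefore Poisson. Setting `t = 0` maps it onto `⟨xy + z³⟩`, the
inclusion of `ℂ[x,y,z]` is an inverse modulo the two ideals, and the substitution intertwines the
brackets because both sides are biderivations that agree on generators. Since `xy + z³` is a
Casimir of the target bracket, that bracket descends to the quotient, which gives the Poisson
isomorphism.
-/

open MvPolynomial

structure IsSkewBiderivation (R : Type*) {A : Type*} [CommSemiring R] [CommRing A] [Algebra R A]
    (B : A → A → A) : Prop where
  add_left : ∀ a b c, B (a + b) c = B a c + B b c
  smul_left : ∀ (r : R) a b, B (r • a) b = r • B a b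
  skew : ∀ a b, B a b = -B b a
  leibniz : ∀ a b c, B a (b * c) = B a b * c + b * B a c

def IsPoissonIdeal {A : Type*} [CommRing A] (B : A → A → A) (I : Ideal A) : Prop :=
  ∀ a b, a ∈ I → B a b ∈ I

def IsCasimir {A : Type*} [Zero A] (B : A → A → A) (a : A) : Prop :=
  ∀ b, B a b = 0

namespace IsSkewBiderivation

section General

variable {R A : Type*} [CommSemiring R] [CommRing A] [Algebra R A] {B : A → A → A}

theorem zero_left (hB : IsSkewBiderivation R B) (a : A) : B 0 a = 0 := by
  simpa using hB.add_left 0 0 a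

theorem zero_right (hB : IsSkewBiderivation R B) (a : A) : B a 0 = 0 := by
  rw [hB.skew, hB.zero_left, neg_zero]

theorem sub_left (hB : IsSkewBiderivation R B) (a b c : A) : B (a - b) c = B a c - B b c := by
  rw [eq_sub_iff_add_eq, ← hB.add_left, sub_add_cancel]

theorem add_right (hB : IsSkewBiderivation R B) (a b c : A) : B a (b + c) = B a b + B a c := by
  rw [hB.skew, hB.add_left, hB.skew b, hB.skew c, neg_add, neg_neg, neg_neg]

theorem smul_right (hB : IsSkewBiderivation R B) (r : R) (a b : A) :
    B a (r • b) = r • B a b := by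
  rw [hB.skew, hB.smul_left, hB.skew b, smul_neg, neg_neg]

theorem mul_left (hB : IsSkewBiderivation R B) (a b c : A) :
    B (a * b) c = B a c * b + a * B b c := by
  rw [hB.skew, hB.leibniz, hB.skew c, hB.skew c]; ring

theorem algebraMap_right (hB : IsSkewBiderivation R B) (a : A) (r : R) :
    B a (algebraMap R A r) = 0 := by
  have h : B a 1 = 0 := by simpa using hB.leibniz a 1 1
  rw [Algebra.algebraMap_eq_smul_one, hB.smul_right, h, smul_zero]

theorem algebraMap_left (hB : IsSkewBiderivation R B) (a : A) (r : R) :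
    B (algebraMap R A r) a = 0 := by
  rw [hB.skew, hB.algebraMap_right, neg_zero]

theorem self [IsAddTorsionFree A] (hB : IsSkewBiderivation R B) (a : A) : B a a = 0 :=
  self_eq_neg.mp (hB.skew a a)

theorem isPoissonIdeal_span (hB : IsSkewBiderivation R B) {S : Set A}
    (h : ∀ s ∈ S, IsCasimir B s) : IsPoissonIdeal B (Ideal.span S) := by
  intro a b ha
  induction ha using Submodule.span_induction with
  | mem s hs => rw [h s hs b]; exact Submodule.zero_mem _
  | zero => rw [hB.zero_left]; exact Submodule.zero_mem _
  | add x y _ _ hx hy => rw [hB.add_left]; exact Ideal.add_mem _ hx hy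
  | smul u x hx hxb =>
    rw [smul_eq_mul, hB.mul_left]
    exact Ideal.add_mem _ (Ideal.mul_mem_left _ _ hx) (Ideal.mul_mem_left _ _ hxb)

theorem mk_bracket_eq (hB : IsSkewBiderivation R B) {I : Ideal A} (hI : IsPoissonIdeal B I)
    {a a' b b' : A} (ha : Ideal.Quotient.mk I a = Ideal.Quotient.mk I a')
    (hb : Ideal.Quotient.mk I b = Ideal.Quotient.mk I b') :
    Ideal.Quotient.mk I (B a b) = Ideal.Quotient.mk I (B a' b') := by
  rw [Ideal.Quotient.eq] at ha hb ⊢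
  have h : B a b - B a' b' = B (a - a') b - B (b - b') a' := by
    rw [hB.sub_left, hB.sub_left, hB.skew b a', hB.skew b' a']; ring
  rw [h]
  exact I.sub_mem (hI _ _ ha) (hI _ _ hb)

end General

section MvPolynomial

variable {R σ A : Type*} [CommRing R] [CommRing A] [Algebra R A]
  {B : MvPolynomial σ R → MvPolynomial σ R → MvPolynomial σ R}

theorem isCasimir_of_bracket_X (hB : IsSkewBiderivation R B) {a : MvPolynomial σ R}
    (h : ∀ i, B a (X i) = 0) : IsCasimir B a := by
  intro g
  induction g using MvPolynomial.induction_on with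
  | C r => rw [← algebraMap_eq, hB.algebraMap_right]
  | add p q hp hq => rw [hB.add_right, hp, hq, add_zero]
  | mul_X p i hp => rw [hB.leibniz, hp, h, zero_mul, mul_zero, add_zero]

theorem map_bracket_of_X {B' : A → A → A} (hB : IsSkewBiderivation R B)
    (hB' : IsSkewBiderivation R B') (φ : MvPolynomial σ R →ₐ[R] A)
    (h : ∀ i j, φ (B (X i) (X j)) = B' (φ (X i)) (φ (X j))) (f g : MvPolynomial σ R) :
    φ (B f g) = B' (φ f) (φ g) := by
  have hX : ∀ i g, φ (B g (X i)) = B' (φ g) (φ (X i)) := by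
    intro i g
    induction g using MvPolynomial.induction_on with
    | C r =>
      rw [← algebraMap_eq, hB.algebraMap_left, AlgHom.commutes, hB'.algebraMap_left, map_zero]
    | add p q hp hq => rw [hB.add_left, map_add, map_add, hB'.add_left, hp, hq]
    | mul_X p j hp => rw [hB.mul_left, map_add, map_mul, map_mul, map_mul, hB'.mul_left, hp, h]
  induction g using MvPolynomial.induction_on with
  | C r =>
    rw [← algebraMap_eq, hB.algebraMap_right, AlgHom.commutes, hB'.algebraMap_right, map_zero]
  | add p q hp hq => rw [hB.add_right, map_add, map_add, hB'.add_right, hp, hq]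
  | mul_X p i hp => rw [hB.leibniz, map_add, map_mul, map_mul, map_mul, hB'.leibniz, hp, hX]

end MvPolynomial

end IsSkewBiderivation

namespace Ideal

variable {R A B : Type*} [CommSemiring R] [CommRing A] [CommRing B] [Algebra R A] [Algebra R B]

def quotientEquivAlgOfInverse {I : Ideal A} {J : Ideal B} (f : A →ₐ[R] B) (g : B →ₐ[R] A)
    (hf : I ≤ J.comap f) (hg : J ≤ I.comap g)
    (hgf : (Quotient.mkₐ R I).comp (g.comp f) = Quotient.mkₐ R I)
    (hfg : (Quotient.mkₐ R J).comp (f.comp g) = Quotient.mkₐ R J) :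
    (A ⧸ I) ≃ₐ[R] B ⧸ J :=
  AlgEquiv.ofAlgHom (quotientMapₐ J f hf) (quotientMapₐ I g hg)
    (Quotient.algHom_ext R <| by
      rw [AlgHom.comp_assoc, quotient_map_comp_mkₐ, ← AlgHom.comp_assoc,
        quotient_map_comp_mkₐ, AlgHom.comp_assoc, hfg]; rfl)
    (Quotient.algHom_ext R <| by
      rw [AlgHom.comp_assoc, quotient_map_comp_mkₐ, ← AlgHom.comp_assoc,
        quotient_map_comp_mkₐ, AlgHom.comp_assoc, hgf]; rfl)

end Ideal

-- `X 0, X 1, X 2, X 3` are `z, x, y, t`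
structure IsBPBracket
    (B : MvPolynomial (Fin 4) ℂ → MvPolynomial (Fin 4) ℂ → MvPolynomial (Fin 4) ℂ) :
    Prop extends IsSkewBiderivation ℂ B where
  z_x : B (X 0) (X 1) = X 1
  z_y : B (X 0) (X 2) = -X 2
  x_y : B (X 1) (X 2) = (3 : ℂ) • X 0 ^ 2 - ((3 : ℂ) / 4) • X 3
  t_left : ∀ f, B (X 3) f = 0

-- `X 0, X 1, X 2` are `x, y, z`
structure IsA2Bracket
    (B : MvPolynomial (Fin 3) ℂ → MvPolynomial (Fin 3) ℂ → MvPolynomial (Fin 3) ℂ) :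
    Prop extends IsSkewBiderivation ℂ B where
  z_x : B (X 2) (X 0) = X 0
  z_y : B (X 2) (X 1) = -X 1
  x_y : B (X 0) (X 1) = (3 : ℂ) • X 2 ^ 2

noncomputable section

def bpRelation : MvPolynomial (Fin 4) ℂ := X 1 * X 2 + X 0 ^ 3 - ((3 : ℂ) / 2) • (X 3 * X 0)

def bpCasimir : MvPolynomial (Fin 4) ℂ := X 1 * X 2 + X 0 ^ 3 - ((3 : ℂ) / 4) • (X 3 * X 0)

def bpIdeal : Ideal (MvPolynomial (Fin 4) ℂ) := Ideal.span {bpRelation, X 3}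

def a2Relation : MvPolynomial (Fin 3) ℂ := X 0 * X 1 + X 2 ^ 3

def a2Ideal : Ideal (MvPolynomial (Fin 3) ℂ) := Ideal.span {a2Relation}

-- `(z, x, y, t) ↦ (z, x, y, 0)`
def bpToA2 : MvPolynomial (Fin 4) ℂ →ₐ[ℂ] MvPolynomial (Fin 3) ℂ :=
  aeval ![X 2, X 0, X 1, 0]

def a2ToBp : MvPolynomial (Fin 3) ℂ →ₐ[ℂ] MvPolynomial (Fin 4) ℂ :=
  aeval ![X 1, X 2, X 0]

theorem bpIdeal_eq_span_bpCasimir : bpIdeal = Ideal.span {bpCasimir, X 3} := by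
  rw [bpIdeal, ← Ideal.span_pair_add_mul_right bpCasimir (X 3) (-((3 : ℂ) / 4) • X 0)]
  congr 3
  rw [bpRelation, bpCasimir, smul_mul_assoc, mul_comm (X 0)]
  module

theorem X_three_mem_bpIdeal : (X 3 : MvPolynomial (Fin 4) ℂ) ∈ bpIdeal :=
  Ideal.subset_span (Set.mem_insert_of_mem _ rfl)

theorem bpIdeal_le_comap_bpToA2 : bpIdeal ≤ a2Ideal.comap bpToA2 := by
  rw [bpIdeal, Ideal.span_le]
  rintro _ (rfl | rfl)
  · exact Ideal.subset_span (by simp [bpToA2, bpRelation, a2Relation])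
  · simp [bpToA2]

theorem a2Ideal_le_comap_a2ToBp : a2Ideal ≤ bpIdeal.comap a2ToBp := by
  rw [a2Ideal, Ideal.span_le, Set.singleton_subset_iff, SetLike.mem_coe, Ideal.mem_comap,
    bpIdeal_eq_span_bpCasimir, Ideal.mem_span_pair]
  refine ⟨1, (3 / 4 : ℂ) • X 0, ?_⟩
  simp only [a2ToBp, a2Relation, bpCasimir, aeval_X, map_add, map_mul, map_pow, one_mul,
    Algebra.smul_mul_assoc, Matrix.cons_val_zero, Matrix.cons_val_one, Matrix.cons_val]
  rw [mul_comm (X 0) (X 3)]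
  module

def bpQuotientEquiv :
    (MvPolynomial (Fin 4) ℂ ⧸ bpIdeal) ≃ₐ[ℂ] MvPolynomial (Fin 3) ℂ ⧸ a2Ideal :=
  Ideal.quotientEquivAlgOfInverse bpToA2 a2ToBp bpIdeal_le_comap_bpToA2 a2Ideal_le_comap_a2ToBp
    (MvPolynomial.algHom_ext fun i => by
      fin_cases i <;>
        simp [bpToA2, a2ToBp, Ideal.Quotient.eq_zero_iff_mem.mpr X_three_mem_bpIdeal])
    (MvPolynomial.algHom_ext fun i => by fin_cases i <;> simp [bpToA2, a2ToBp])

theorem bpQuotientEquiv_mk (f : MvPolynomial (Fin 4) ℂ) :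
    bpQuotientEquiv (Ideal.Quotient.mk _ f) = Ideal.Quotient.mk _ (bpToA2 f) :=
  rfl

end

section Brackets

variable {B : MvPolynomial (Fin 4) ℂ → MvPolynomial (Fin 4) ℂ → MvPolynomial (Fin 4) ℂ}
  {B' : MvPolynomial (Fin 3) ℂ → MvPolynomial (Fin 3) ℂ → MvPolynomial (Fin 3) ℂ}

theorem IsBPBracket.t_right (hB : IsBPBracket B) (f : MvPolynomial (Fin 4) ℂ) :
    B f (X 3) = 0 := by
  rw [hB.skew, hB.t_left, neg_zero]

theorem IsBPBracket.isCasimir_bpCasimir (hB : IsBPBracket B) : IsCasimir B bpCasimir := by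
  refine hB.isCasimir_of_bracket_X fun i => ?_
  simp only [bpCasimir, hB.sub_left, hB.add_left, hB.smul_left, hB.mul_left, pow_succ, pow_zero,
    one_mul, hB.t_left, zero_mul, zero_add]
  fin_cases i <;>
    simp only [Fin.zero_eta, Fin.mk_one, Fin.reduceFinMk, hB.self, hB.t_right,
      hB.skew (X 1) (X 0), hB.skew (X 2) (X 0), hB.skew (X 2) (X 1), hB.z_x, hB.z_y, hB.x_y,
      smul_eq_C_mul, map_ofNat] <;>
    ring

theorem IsBPBracket.isPoissonIdeal_bpIdeal (hB : IsBPBracket B) : IsPoissonIdeal B bpIdeal := by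
  rw [bpIdeal_eq_span_bpCasimir]
  refine hB.isPoissonIdeal_span ?_
  rintro _ (rfl | rfl)
  exacts [hB.isCasimir_bpCasimir, hB.t_left]

theorem IsA2Bracket.isCasimir_a2Relation (hB : IsA2Bracket B') : IsCasimir B' a2Relation := by
  refine hB.isCasimir_of_bracket_X fun i => ?_
  simp only [a2Relation, hB.add_left, hB.mul_left, pow_succ, pow_zero, one_mul]
  fin_cases i <;>
    simp only [Fin.zero_eta, Fin.mk_one, Fin.reduceFinMk, hB.self, hB.skew (X 1) (X 0),
      hB.skew (X 0) (X 2), hB.skew (X 1) (X 2), hB.z_x, hB.z_y, hB.x_y, smul_eq_C_mul,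
      map_ofNat] <;>
    ring

theorem IsA2Bracket.isPoissonIdeal_a2Ideal (hB : IsA2Bracket B') : IsPoissonIdeal B' a2Ideal :=
  hB.isPoissonIdeal_span fun _ h => h ▸ hB.isCasimir_a2Relation

theorem IsBPBracket.bpToA2_bracket (hB : IsBPBracket B) (hB' : IsA2Bracket B')
    (f g : MvPolynomial (Fin 4) ℂ) : bpToA2 (B f g) = B' (bpToA2 f) (bpToA2 g) := by
  refine hB.map_bracket_of_X hB'.toIsSkewBiderivation bpToA2 (fun i j => ?_) f g
  fin_cases i <;> fin_cases j <;>
    simp [bpToA2, hB.self, hB'.self, hB.t_left, hB.t_right, hB'.zero_left, hB'.zero_right,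
      hB.skew (X 1) (X 0), hB.skew (X 2) (X 0), hB.skew (X 2) (X 1), hB.z_x, hB.z_y, hB.x_y,
      hB'.skew (X 1) (X 0), hB'.skew (X 0) (X 2), hB'.skew (X 1) (X 2), hB'.z_x, hB'.z_y, hB'.x_y]

end Brackets

theorem stmt_18_general
    (B : MvPolynomial (Fin 4) ℂ → MvPolynomial (Fin 4) ℂ → MvPolynomial (Fin 4) ℂ)
    (hadd : ∀ a b c, B (a + b) c = B a c + B b c)
    (hsmul : ∀ (r : ℂ) a b, B (r • a) b = r • B a b)
    (hskew : ∀ a b, B a b = -B b a)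
    (hleib : ∀ a b c, B a (b * c) = B a b * c + b * B a c)
    (hzx : B (X 0) (X 1) = X 1)
    (hzy : B (X 0) (X 2) = -X 2)
    (hxy : B (X 1) (X 2) = (3 : ℂ) • (X 0) ^ 2 - ((3 : ℂ) / 4) • X 3)
    (ht : ∀ f, B (X 3) f = 0)
    (B' : MvPolynomial (Fin 3) ℂ → MvPolynomial (Fin 3) ℂ → MvPolynomial (Fin 3) ℂ)
    (hadd' : ∀ a b c, B' (a + b) c = B' a c + B' b c)
    (hsmul' : ∀ (r : ℂ) a b, B' (r • a) b = r • B' a b)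
    (hskew' : ∀ a b, B' a b = -B' b a)
    (hleib' : ∀ a b c, B' a (b * c) = B' a b * c + b * B' a c)
    (hzx' : B' (X 2) (X 0) = X 0)
    (hzy' : B' (X 2) (X 1) = -X 1)
    (hxy' : B' (X 0) (X 1) = (3 : ℂ) • (X 2) ^ 2) :
    (∀ f g : MvPolynomial (Fin 4) ℂ,
      f ∈ Ideal.span {(X 1 * X 2 + (X 0) ^ 3 - ((3 : ℂ)/2) • (X 3 * X 0) :
            MvPolynomial (Fin 4) ℂ), (X 3 : MvPolynomial (Fin 4) ℂ)} →
      B f g ∈ Ideal.span {(X 1 * X 2 + (X 0) ^ 3 - ((3 : ℂ)/2) • (X 3 * X 0) :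
            MvPolynomial (Fin 4) ℂ), (X 3 : MvPolynomial (Fin 4) ℂ)}) ∧
    ∃ φ : (MvPolynomial (Fin 4) ℂ ⧸
        Ideal.span {(X 1 * X 2 + (X 0) ^ 3 - ((3 : ℂ)/2) • (X 3 * X 0) :
            MvPolynomial (Fin 4) ℂ), (X 3 : MvPolynomial (Fin 4) ℂ)}) ≃+*
      (MvPolynomial (Fin 3) ℂ ⧸
        Ideal.span {(X 0 * X 1 + (X 2) ^ 3 : MvPolynomial (Fin 3) ℂ)}),
      φ (Ideal.Quotient.mk _ (X 1)) = Ideal.Quotient.mk _ (X 0) ∧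
      φ (Ideal.Quotient.mk _ (X 2)) = Ideal.Quotient.mk _ (X 1) ∧
      φ (Ideal.Quotient.mk _ (X 0)) = Ideal.Quotient.mk _ (X 2) ∧
      (∀ (f g : MvPolynomial (Fin 4) ℂ) (f' g' : MvPolynomial (Fin 3) ℂ),
        φ (Ideal.Quotient.mk _ f) = Ideal.Quotient.mk _ f' →
        φ (Ideal.Quotient.mk _ g) = Ideal.Quotient.mk _ g' →
        φ (Ideal.Quotient.mk _ (B f g)) = Ideal.Quotient.mk _ (B' f' g')) := by
  have hB : IsBPBracket B := ⟨⟨hadd, hsmul, hskew, hleib⟩, hzx, hzy, hxy, ht⟩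
  have hB' : IsA2Bracket B' := ⟨⟨hadd', hsmul', hskew', hleib'⟩, hzx', hzy', hxy'⟩
  have hX : ∀ i, bpQuotientEquiv (Ideal.Quotient.mk _ (X i)) =
      Ideal.Quotient.mk _ (![X 2, X 0, X 1, 0] i) := fun i => by simp [bpQuotientEquiv_mk, bpToA2]
  refine ⟨hB.isPoissonIdeal_bpIdeal, bpQuotientEquiv.toRingEquiv, hX 1, hX 2, hX 0,
    fun f g f' g' hf hg => ?_⟩
  change Ideal.Quotient.mk _ (bpToA2 (B f g)) = _
  rw [hB.bpToA2_bracket hB']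
  exact hB'.mk_bracket_eq hB'.isPoissonIdeal_a2Ideal hf hg

/-- In the Bershadsky–Polyakov C₂-algebra `ℂ[z,x,y,t]` with Poisson bracket
`{z,x}=x`, `{z,y}=-y`, `{x,y}=3z²-(3/4)t` and `t` Poisson central, the ideal
`⟨xy + z³ - (3/2)tz, t⟩` is a Poisson ideal, and the quotient is
Poisson-isomorphic to `ℂ[x,y,z]/⟨xy+z³⟩` with bracket `{z,x}=x`, `{z,y}=-y`,
`{x,y}=3z²`. (In `Fin 4`: `X 0 = z, X 1 = x, X 2 = y, X 3 = t`; in `Fin 3`: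
`X 0 = x, X 1 = y, X 2 = z`.) -/
theorem stmt_18
    (B : MvPolynomial (Fin 4) ℂ → MvPolynomial (Fin 4) ℂ → MvPolynomial (Fin 4) ℂ)
    (hadd : ∀ a b c, B (a + b) c = B a c + B b c)
    (hsmul : ∀ (r : ℂ) a b, B (r • a) b = r • B a b)
    (hskew : ∀ a b, B a b = -B b a)
    (hleib : ∀ a b c, B a (b * c) = B a b * c + b * B a c)
    (hjac : ∀ a b c, B a (B b c) + B b (B c a) + B c (B a b) = 0)
    (hzx : B (X 0) (X 1) = X 1)
    (hzy : B (X 0) (X 2) = -X 2)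
    (hxy : B (X 1) (X 2) = (3 : ℂ) • (X 0) ^ 2 - ((3 : ℂ) / 4) • X 3)
    (ht : ∀ f, B (X 3) f = 0)
    (B' : MvPolynomial (Fin 3) ℂ → MvPolynomial (Fin 3) ℂ → MvPolynomial (Fin 3) ℂ)
    (hadd' : ∀ a b c, B' (a + b) c = B' a c + B' b c)
    (hsmul' : ∀ (r : ℂ) a b, B' (r • a) b = r • B' a b)
    (hskew' : ∀ a b, B' a b = -B' b a)
    (hleib' : ∀ a b c, B' a (b * c) = B' a b * c + b * B' a c)
    (hjac' : ∀ a b c, B' a (B' b c) + B' b (B' c a) + B' c (B' a b) = 0)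
    (hzx' : B' (X 2) (X 0) = X 0)
    (hzy' : B' (X 2) (X 1) = -X 1)
    (hxy' : B' (X 0) (X 1) = (3 : ℂ) • (X 2) ^ 2) :
    (∀ f g : MvPolynomial (Fin 4) ℂ,
      f ∈ Ideal.span {(X 1 * X 2 + (X 0) ^ 3 - ((3 : ℂ)/2) • (X 3 * X 0) :
            MvPolynomial (Fin 4) ℂ), (X 3 : MvPolynomial (Fin 4) ℂ)} →
      B f g ∈ Ideal.span {(X 1 * X 2 + (X 0) ^ 3 - ((3 : ℂ)/2) • (X 3 * X 0) :
            MvPolynomial (Fin 4) ℂ), (X 3 : MvPolynomial (Fin 4) ℂ)}) ∧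
    ∃ φ : (MvPolynomial (Fin 4) ℂ ⧸
        Ideal.span {(X 1 * X 2 + (X 0) ^ 3 - ((3 : ℂ)/2) • (X 3 * X 0) :
            MvPolynomial (Fin 4) ℂ), (X 3 : MvPolynomial (Fin 4) ℂ)}) ≃+*
      (MvPolynomial (Fin 3) ℂ ⧸
        Ideal.span {(X 0 * X 1 + (X 2) ^ 3 : MvPolynomial (Fin 3) ℂ)}),
      φ (Ideal.Quotient.mk _ (X 1)) = Ideal.Quotient.mk _ (X 0) ∧
      φ (Ideal.Quotient.mk _ (X 2)) = Ideal.Quotient.mk _ (X 1) ∧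
      φ (Ideal.Quotient.mk _ (X 0)) = Ideal.Quotient.mk _ (X 2) ∧
      (∀ (f g : MvPolynomial (Fin 4) ℂ) (f' g' : MvPolynomial (Fin 3) ℂ),
        φ (Ideal.Quotient.mk _ f) = Ideal.Quotient.mk _ f' →
        φ (Ideal.Quotient.mk _ g) = Ideal.Quotient.mk _ g' →
        φ (Ideal.Quotient.mk _ (B f g)) = Ideal.Quotient.mk _ (B' f' g')) :=
  stmt_18_general B hadd hsmul hskew hleib hzx hzy hxy ht B' hadd' hsmul' hskew' hleib' hzx' hzy'
    hxy'
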